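/- Let m ≥ 2 be an even integer and h ≥ 0, and let P_m^h(x,y) = G_m^h(⟨x,y⟩, ‖x‖²‖y‖²) for x, y ∈ ℝ^m. Then: (i) for every fixed y ∈ ℝ^m, the function x ↦ P_m^h(x,y) is a polynomial function that is harmonic (its Laplacian in x vanishes identically) and homogeneous of degree h, i.e. P_m^h(λx, y) = λ^h·P_m^h(x,y) for all λ ∈ ℝ; (ii) the same holds with the roles of x and y exchanged; (iii) P_m^h(Sx, Sy) = P_m^h(x,y) for every orthogonal linear map S of ℝ^m and all x, y ∈ ℝ^m. -/

import Mathlib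

/-- The Laplacian `Δf(x) = ∑ᵢ ∂²f/∂xᵢ²(x)` of `f : ℝ^m → ℝ`. -/
noncomputable def laplacian {m : ℕ} (f : (Fin m → ℝ) → ℝ) (x : Fin m → ℝ) : ℝ :=
  ∑ i, fderiv ℝ (fun y => fderiv ℝ f y (Pi.single i 1)) x (Pi.single i 1)

namespace GegAux
open PowerSeries MvPolynomial


variable {m : ℕ}

noncomputable def pdser (i : Fin m) (f : PowerSeries (MvPolynomial (Fin m) ℝ)) :
    PowerSeries (MvPolynomial (Fin m) ℝ) :=
  PowerSeries.mk fun t => MvPolynomial.pderiv i (PowerSeries.coeff t f)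

theorem coeff_pdser (i : Fin m) (f) (t : ℕ) :
    PowerSeries.coeff t (pdser i f) = MvPolynomial.pderiv i (PowerSeries.coeff t f) :=
  coeff_mk _ _

theorem pdser_add (i : Fin m) (f g) : pdser i (f + g) = pdser i f + pdser i g := by
  ext t; simp [coeff_pdser]

theorem pdser_sub (i : Fin m) (f g) : pdser i (f - g) = pdser i f - pdser i g := by
  ext t; simp [coeff_pdser]

theorem pdser_neg (i : Fin m) (f) : pdser i (-f) = -pdser i f := by
  ext t; simp [coeff_pdser]

theorem pdser_zero (i : Fin m) : pdser i (0 : PowerSeries (MvPolynomial (Fin m) ℝ)) = 0 := by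
  ext t; simp [coeff_pdser]

theorem pdser_one (i : Fin m) : pdser i 1 = 0 := by
  ext t; simp [coeff_pdser, PowerSeries.coeff_one]
  split_ifs <;> simp

theorem pdser_mul (i : Fin m) (f g) : pdser i (f * g) = pdser i f * g + f * pdser i g := by
  ext t
  simp only [coeff_pdser, PowerSeries.coeff_mul, map_sum, MvPolynomial.pderiv_mul,
    map_add, Finset.sum_add_distrib]

theorem pdser_pow (i : Fin m) (f) (j : ℕ) :
    pdser i (f ^ j) = (j : PowerSeries (MvPolynomial (Fin m) ℝ)) * f ^ (j - 1) * pdser i f := by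
  induction j with
  | zero => simp [pdser_one]
  | succ K ih =>
    rcases Nat.eq_zero_or_pos K with hK | hK
    · subst hK; simp [pow_one]
    · rw [pow_succ, pdser_mul, ih]
      obtain ⟨L, rfl⟩ : ∃ L, K = L + 1 := ⟨K - 1, (Nat.succ_pred_eq_of_pos hK).symm⟩
      simp only [Nat.add_sub_cancel]
      push_cast
      ring

theorem pdser_C_mul_X_pow (i : Fin m) (a : MvPolynomial (Fin m) ℝ) (t : ℕ) :
    pdser i (PowerSeries.C a * PowerSeries.X ^ t)
      = PowerSeries.C (MvPolynomial.pderiv i a) * PowerSeries.X ^ t := by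
  ext u
  simp only [coeff_pdser, PowerSeries.coeff_C_mul, PowerSeries.coeff_X_pow, mul_ite, mul_one,
    mul_zero]
  split_ifs <;> simp

theorem pdser_C_mul_X (i : Fin m) (a : MvPolynomial (Fin m) ℝ) :
    pdser i (PowerSeries.C a * PowerSeries.X)
      = PowerSeries.C (MvPolynomial.pderiv i a) * PowerSeries.X := by
  have := pdser_C_mul_X_pow i a 1
  simpa using this

theorem pdser_C (i : Fin m) (a : MvPolynomial (Fin m) ℝ) :
    pdser i (PowerSeries.C a) = PowerSeries.C (MvPolynomial.pderiv i a) := by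
  have := pdser_C_mul_X_pow i a 0
  simpa using this

theorem pdser_natCast (i : Fin m) (j : ℕ) :
    pdser i (j : PowerSeries (MvPolynomial (Fin m) ℝ)) = 0 := by
  rw [← map_natCast (PowerSeries.C (R := MvPolynomial (Fin m) ℝ)) j, pdser_C]
  simp

/-! ### The kernel series -/

noncomputable def nuY (y : Fin m → ℝ) : ℝ := ∑ j, y j ^ 2

noncomputable def sA (y : Fin m → ℝ) : MvPolynomial (Fin m) ℝ :=
  ∑ j, MvPolynomial.C (y j) * MvPolynomial.X j

noncomputable def nA (y : Fin m → ℝ) : MvPolynomial (Fin m) ℝ :=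
  MvPolynomial.C (nuY y) * ∑ j, MvPolynomial.X j ^ 2

noncomputable def QA (y : Fin m → ℝ) : PowerSeries (MvPolynomial (Fin m) ℝ) :=
  1 - PowerSeries.C (2 * sA y) * PowerSeries.X + PowerSeries.C (nA y) * PowerSeries.X ^ 2

noncomputable def RA (y : Fin m → ℝ) : PowerSeries (MvPolynomial (Fin m) ℝ) :=
  PowerSeries.invOfUnit (QA y) 1

theorem constQA (y : Fin m → ℝ) : constantCoeff (QA y) = 1 := by
  simp [QA]

theorem QA_mul_RA (y : Fin m → ℝ) : QA y * RA y = 1 :=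
  mul_invOfUnit _ 1 (by simpa using constQA y)

theorem pderiv_two (i : Fin m) : MvPolynomial.pderiv i (2 : MvPolynomial (Fin m) ℝ) = 0 := by
  rw [← map_ofNat (MvPolynomial.C : ℝ →+* MvPolynomial (Fin m) ℝ) 2, MvPolynomial.pderiv_C]

theorem pderiv_sA (i : Fin m) (y : Fin m → ℝ) :
    MvPolynomial.pderiv i (sA y) = MvPolynomial.C (y i) := by
  classical
  simp [sA, MvPolynomial.pderiv_C_mul, MvPolynomial.pderiv_X, Pi.single_apply,
    Finset.sum_ite_eq', mul_ite, mul_one, mul_zero]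

theorem pderiv_nA (i : Fin m) (y : Fin m → ℝ) :
    MvPolynomial.pderiv i (nA y) = 2 * MvPolynomial.C (nuY y) * MvPolynomial.X i := by
  classical
  simp [nA, MvPolynomial.pderiv_C_mul, MvPolynomial.pderiv_pow, MvPolynomial.pderiv_X,
    Pi.single_apply, Finset.sum_ite_eq', mul_ite, mul_one, mul_zero]
  ring

theorem pdser_QA (i : Fin m) (y : Fin m → ℝ) :
    pdser i (QA y) = -(PowerSeries.C (2 * MvPolynomial.C (y i)) * PowerSeries.X)
      + PowerSeries.C (2 * MvPolynomial.C (nuY y) * MvPolynomial.X i) * PowerSeries.X ^ 2 := by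
  rw [QA, pdser_add, pdser_sub, pdser_one, pdser_C_mul_X, pdser_C_mul_X_pow]
  have h1 : MvPolynomial.pderiv i (2 * sA y) = 2 * MvPolynomial.C (y i) := by
    rw [MvPolynomial.pderiv_mul, pderiv_sA, pderiv_two]
    simp
  rw [h1, pderiv_nA]
  ring

theorem pdser_pdser_QA (i : Fin m) (y : Fin m → ℝ) :
    pdser i (pdser i (QA y))
      = PowerSeries.C (2 * MvPolynomial.C (nuY y)) * PowerSeries.X ^ 2 := by
  rw [pdser_QA, pdser_add, pdser_neg, pdser_C_mul_X, pdser_C_mul_X_pow]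
  have h1 : MvPolynomial.pderiv i (2 * MvPolynomial.C (y i)) = 0 := by
    rw [MvPolynomial.pderiv_mul, pderiv_two]; simp
  have h2 : MvPolynomial.pderiv i (2 * MvPolynomial.C (nuY y) * MvPolynomial.X i)
      = 2 * MvPolynomial.C (nuY y) := by
    rw [MvPolynomial.pderiv_mul, MvPolynomial.pderiv_mul, pderiv_two]
    simp
  rw [h1, h2]
  simp

theorem sum_pdser_pdser_QA (y : Fin m → ℝ) :
    ∑ i, pdser i (pdser i (QA y))
      = (m : PowerSeries (MvPolynomial (Fin m) ℝ))
        * (PowerSeries.C (2 * MvPolynomial.C (nuY y)) * PowerSeries.X ^ 2) := by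
  rw [Finset.sum_congr rfl fun i _ => pdser_pdser_QA i y]
  simp [Finset.sum_const, nsmul_eq_mul]

theorem sum_sq_pdser_QA (y : Fin m → ℝ) :
    ∑ i, (pdser i (QA y)) ^ 2
      = 4 * PowerSeries.C (MvPolynomial.C (nuY y)) * PowerSeries.X ^ 2 * QA y := by
  have e : ∀ i : Fin m, (pdser i (QA y)) ^ 2
      = PowerSeries.C ((2 * MvPolynomial.C (y i)) ^ 2) * PowerSeries.X ^ 2
        - PowerSeries.C (2 * (2 * MvPolynomial.C (y i))
            * (2 * MvPolynomial.C (nuY y) * MvPolynomial.X i)) * PowerSeries.X ^ 3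
        + PowerSeries.C ((2 * MvPolynomial.C (nuY y) * MvPolynomial.X i) ^ 2)
            * PowerSeries.X ^ 4 := by
    intro i
    rw [pdser_QA]
    simp only [map_pow, map_mul, map_ofNat]
    ring
  rw [Finset.sum_congr rfl fun i _ => e i]
  rw [Finset.sum_add_distrib, Finset.sum_sub_distrib, ← Finset.sum_mul, ← Finset.sum_mul,
    ← Finset.sum_mul, ← map_sum, ← map_sum, ← map_sum]
  have hA1 : (∑ i, (2 * MvPolynomial.C (y i) : MvPolynomial (Fin m) ℝ) ^ 2)
      = 4 * MvPolynomial.C (nuY y) := by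
    have : ∀ i : Fin m, (2 * MvPolynomial.C (y i) : MvPolynomial (Fin m) ℝ) ^ 2
        = 4 * MvPolynomial.C (y i ^ 2) := by
      intro i; rw [map_pow]; ring
    rw [Finset.sum_congr rfl fun i _ => this i, ← Finset.mul_sum, ← map_sum, nuY]
  have hA2 : (∑ i, (2 * (2 * MvPolynomial.C (y i))
        * (2 * MvPolynomial.C (nuY y) * MvPolynomial.X i) : MvPolynomial (Fin m) ℝ))
      = 4 * MvPolynomial.C (nuY y) * (2 * sA y) := by
    have : ∀ i : Fin m, (2 * (2 * MvPolynomial.C (y i))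
        * (2 * MvPolynomial.C (nuY y) * MvPolynomial.X i) : MvPolynomial (Fin m) ℝ)
        = 8 * MvPolynomial.C (nuY y) * (MvPolynomial.C (y i) * MvPolynomial.X i) := by
      intro i; ring
    rw [Finset.sum_congr rfl fun i _ => this i, ← Finset.mul_sum, sA]
    ring
  have hA3 : (∑ i, ((2 * MvPolynomial.C (nuY y) * MvPolynomial.X i) ^ 2 : MvPolynomial (Fin m) ℝ))
      = 4 * MvPolynomial.C (nuY y) * nA y := by
    have : ∀ i : Fin m, ((2 * MvPolynomial.C (nuY y) * MvPolynomial.X i) ^ 2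
        : MvPolynomial (Fin m) ℝ)
        = 4 * MvPolynomial.C (nuY y) ^ 2 * MvPolynomial.X i ^ 2 := by
      intro i; ring
    rw [Finset.sum_congr rfl fun i _ => this i, ← Finset.mul_sum, nA]
    ring
  rw [hA1, hA2, hA3, QA]
  simp only [map_mul, map_ofNat, map_pow]
  ring

theorem sum_pdser_pdser_pow (k : ℕ) (hk2 : 2 * (k + 1) = m) (y : Fin m → ℝ) :
    ∑ i, pdser i (pdser i (RA y ^ k)) = 0 := by
  rcases Nat.eq_zero_or_pos k with hk | hk
  · subst hk
    simp [pow_zero, pdser_one, pdser_zero]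
  obtain ⟨K, rfl⟩ : ∃ K, k = K + 1 := ⟨k - 1, (Nat.succ_pred_eq_of_pos hk).symm⟩
  have hQR : QA y * RA y = 1 := QA_mul_RA y
  have e1 : ∀ i, pdser i (QA y) * RA y + QA y * pdser i (RA y) = 0 := by
    intro i
    have h0 := congrArg (pdser i) hQR
    rwa [pdser_mul, pdser_one] at h0
  have e2 : ∀ i, pdser i (RA y) = -(pdser i (QA y) * RA y ^ 2) := by
    intro i
    linear_combination RA y * e1 i - pdser i (RA y) * hQR
  have e3 : ∀ i, pdser i (RA y ^ (K + 1))
      = -(((K + 1 : ℕ) : PowerSeries (MvPolynomial (Fin m) ℝ))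
          * (RA y ^ (K + 2) * pdser i (QA y))) := by
    intro i
    rw [pdser_pow, e2 i]
    simp only [Nat.add_sub_cancel]
    push_cast
    ring
  have e4 : ∀ i, pdser i (pdser i (RA y ^ (K + 1)))
      = ((K + 1 : ℕ) : PowerSeries (MvPolynomial (Fin m) ℝ))
        * (((K + 2 : ℕ) : PowerSeries (MvPolynomial (Fin m) ℝ))
            * (RA y ^ (K + 3) * (pdser i (QA y)) ^ 2)
          - RA y ^ (K + 2) * pdser i (pdser i (QA y))) := by
    intro i
    rw [e3 i, pdser_neg, pdser_mul, pdser_natCast, pdser_mul, pdser_pow, e2 i,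
      show K + 2 - 1 = K + 1 by omega]
    push_cast
    ring
  have expand : ((K + 1 : ℕ) : PowerSeries (MvPolynomial (Fin m) ℝ))
        * (((K + 2 : ℕ) : PowerSeries (MvPolynomial (Fin m) ℝ))
            * (RA y ^ (K + 3) * (∑ i, (pdser i (QA y)) ^ 2))
          - RA y ^ (K + 2) * (∑ i, pdser i (pdser i (QA y))))
      = ∑ i, (((K + 1 : ℕ) : PowerSeries (MvPolynomial (Fin m) ℝ))
        * (((K + 2 : ℕ) : PowerSeries (MvPolynomial (Fin m) ℝ))
            * (RA y ^ (K + 3) * (pdser i (QA y)) ^ 2)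
          - RA y ^ (K + 2) * pdser i (pdser i (QA y)))) := by
    simp only [Finset.mul_sum, mul_sub, Finset.sum_sub_distrib]
  rw [Finset.sum_congr rfl fun i _ => e4 i, ← expand, sum_sq_pdser_QA, sum_pdser_pdser_QA]
  have hm' : ((m : ℕ) : PowerSeries (MvPolynomial (Fin m) ℝ))
      = 2 * ((K : PowerSeries (MvPolynomial (Fin m) ℝ)) + 2) := by
    rw [← hk2]
    push_cast
    ring
  rw [hm']
  simp only [map_mul, map_ofNat]
  push_cast
  linear_combination (((K : PowerSeries (MvPolynomial (Fin m) ℝ)) + 1) * ((K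
    : PowerSeries (MvPolynomial (Fin m) ℝ)) + 2) * 4
    * PowerSeries.C (MvPolynomial.C (nuY y)) * PowerSeries.X ^ 2 * RA y ^ (K + 2)) * hQR

theorem inv_unique {R : Type*} [CommRing R] {a b c : R} (hb : a * b = 1) (hc : a * c = 1) :
    b = c := by
  calc b = b * (a * c) := by rw [hc, mul_one]
  _ = (a * b) * c := by ring
  _ = c := by rw [hb, one_mul]

theorem harm_coeff (k : ℕ) (hk2 : 2 * (k + 1) = m) (y : Fin m → ℝ) (h : ℕ) :
    ∑ i, MvPolynomial.pderiv i (MvPolynomial.pderiv i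
      (PowerSeries.coeff h (RA y ^ k))) = 0 := by
  have h0 := congrArg (PowerSeries.coeff h) (sum_pdser_pdser_pow k hk2 y)
  rw [map_sum, map_zero] at h0
  simpa only [coeff_pdser] using h0

theorem eval_sA (y x : Fin m → ℝ) : MvPolynomial.eval x (sA y) = ∑ i, x i * y i := by
  simp [sA, mul_comm]

theorem eval_nA (y x : Fin m → ℝ) :
    MvPolynomial.eval x (nA y) = (∑ i, x i ^ 2) * (∑ i, y i ^ 2) := by
  simp [nA, nuY, mul_comm]

theorem eval_coeff (k : ℕ) (G : ℕ → ℝ → ℝ → ℝ)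
    (hGk : ∀ s n : ℝ,
      (1 - PowerSeries.C (R := ℝ) (2 * s) * PowerSeries.X
        + PowerSeries.C (R := ℝ) n * PowerSeries.X ^ 2) ^ k
        * PowerSeries.mk (fun h => G h s n) = 1)
    (y x : Fin m → ℝ) (h : ℕ) :
    G h (MvPolynomial.eval x (sA y)) (MvPolynomial.eval x (nA y))
      = MvPolynomial.eval x (PowerSeries.coeff h (RA y ^ k)) := by
  have h1 : PowerSeries.map (MvPolynomial.eval x) (QA y ^ k * RA y ^ k) = 1 := by
    rw [← mul_pow, QA_mul_RA, one_pow, map_one]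
  have h2 : PowerSeries.map (MvPolynomial.eval x) (QA y)
      = 1 - PowerSeries.C (R := ℝ) (2 * MvPolynomial.eval x (sA y)) * PowerSeries.X
        + PowerSeries.C (R := ℝ) (MvPolynomial.eval x (nA y)) * PowerSeries.X ^ 2 := by
    rw [QA]
    simp only [map_add, map_sub, map_one, map_mul, map_pow, PowerSeries.map_C,
      PowerSeries.map_X, map_ofNat]
  rw [map_mul, map_pow, h2] at h1
  have h4 := inv_unique h1 (hGk (MvPolynomial.eval x (sA y)) (MvPolynomial.eval x (nA y)))
  have h5 := congrArg (PowerSeries.coeff h) h4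
  rw [PowerSeries.coeff_map, PowerSeries.coeff_mk] at h5
  exact h5.symm

theorem rescale_C' {R : Type*} [CommRing R] (a r : R) :
    rescale a (PowerSeries.C r) = PowerSeries.C r := by
  ext t
  simp only [coeff_rescale, PowerSeries.coeff_C]
  split_ifs with ht
  · subst ht; simp
  · simp

theorem homogG (k : ℕ) (G : ℕ → ℝ → ℝ → ℝ)
    (hGk : ∀ s n : ℝ,
      (1 - PowerSeries.C (R := ℝ) (2 * s) * PowerSeries.X
        + PowerSeries.C (R := ℝ) n * PowerSeries.X ^ 2) ^ k
        * PowerSeries.mk (fun h => G h s n) = 1)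
    (lam s n : ℝ) (h : ℕ) :
    G h (lam * s) (lam ^ 2 * n) = lam ^ h * G h s n := by
  have h1 := congrArg (rescale lam) (hGk s n)
  rw [map_one, map_mul, map_pow] at h1
  have h2 : rescale lam (1 - PowerSeries.C (R := ℝ) (2 * s) * PowerSeries.X
        + PowerSeries.C (R := ℝ) n * PowerSeries.X ^ 2)
      = 1 - PowerSeries.C (R := ℝ) (2 * (lam * s)) * PowerSeries.X
        + PowerSeries.C (R := ℝ) (lam ^ 2 * n) * PowerSeries.X ^ 2 := by
    simp only [map_add, map_sub, map_one, map_mul, map_pow, rescale_X, rescale_C']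
    ring
  rw [h2, rescale_mk] at h1
  have h4 := inv_unique (hGk (lam * s) (lam ^ 2 * n)) h1
  have h5 := congrArg (PowerSeries.coeff h) h4
  rw [PowerSeries.coeff_mk, PowerSeries.coeff_mk] at h5
  exact h5



open MvPolynomial

variable {m : ℕ}

noncomputable def evalDeriv (p : MvPolynomial (Fin m) ℝ) (x : Fin m → ℝ) :
    (Fin m → ℝ) →L[ℝ] ℝ :=
  ∑ i, MvPolynomial.eval x (pderiv i p) • (ContinuousLinearMap.proj i :
    (Fin m → ℝ) →L[ℝ] ℝ)

theorem hasFDerivAt_eval (p : MvPolynomial (Fin m) ℝ) (x : Fin m → ℝ) :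
    HasFDerivAt (fun x => MvPolynomial.eval x p) (evalDeriv p x) x := by
  induction p using MvPolynomial.induction_on generalizing x with
  | C a =>
    have : evalDeriv (C a : MvPolynomial (Fin m) ℝ) x = 0 := by
      simp [evalDeriv, pderiv_C]
    rw [this]
    simpa using hasFDerivAt_const (c := a) (x := x)
  | add p q hp hq =>
    have : evalDeriv (p + q) x = evalDeriv p x + evalDeriv q x := by
      simp [evalDeriv, add_smul, Finset.sum_add_distrib]
    rw [this]
    have := (hp x).add (hq x)
    simpa only [map_add, Pi.add_def] using this
  | mul_X p j hp =>
    have h1 : HasFDerivAt (fun x : Fin m → ℝ => MvPolynomial.eval x p * x j)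
        ((MvPolynomial.eval x p) • (ContinuousLinearMap.proj j) + (x j) • evalDeriv p x) x :=
      (hp x).mul ((ContinuousLinearMap.proj j : (Fin m → ℝ) →L[ℝ] ℝ).hasFDerivAt)
    have h2 : evalDeriv (p * X j) x
        = (MvPolynomial.eval x p) • (ContinuousLinearMap.proj j) + (x j) • evalDeriv p x := by
      classical
      simp only [evalDeriv, pderiv_mul, map_add, map_mul, eval_X, add_smul,
        Finset.sum_add_distrib]
      rw [add_comm]
      congr 1
      · rw [Finset.sum_eq_single j]
        · simp
        · intro i _ hij
          simp [pderiv_X_of_ne hij.symm]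
        · simp
      · rw [Finset.smul_sum]
        apply Finset.sum_congr rfl
        intro i _
        rw [smul_smul, mul_comm]
    rw [h2]
    simpa using h1

theorem fderiv_eval_apply (p : MvPolynomial (Fin m) ℝ) (x : Fin m → ℝ) (i : Fin m) :
    fderiv ℝ (fun x => MvPolynomial.eval x p) x (Pi.single i 1)
      = MvPolynomial.eval x (pderiv i p) := by
  classical
  rw [(hasFDerivAt_eval p x).fderiv]
  simp only [evalDeriv, ContinuousLinearMap.sum_apply, ContinuousLinearMap.smul_apply,
    ContinuousLinearMap.proj_apply, Pi.single_apply, smul_eq_mul, mul_ite, mul_one, mul_zero]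
  rw [Finset.sum_eq_single i] <;> simp_all

theorem laplacian_eval (p : MvPolynomial (Fin m) ℝ) (x : Fin m → ℝ) :
    laplacian (fun x => MvPolynomial.eval x p) x
      = MvPolynomial.eval x (∑ i, pderiv i (pderiv i p)) := by
  rw [laplacian, map_sum]
  apply Finset.sum_congr rfl
  intro i _
  have : (fun y => fderiv ℝ (fun x => MvPolynomial.eval x p) y (Pi.single i 1))
      = fun y => MvPolynomial.eval y (pderiv i p) := funext fun y => fderiv_eval_apply p y i
  rw [this, fderiv_eval_apply]


/-- Master lemma: for fixed `y`, the kernel is a polynomial in `x` and harmonic. -/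
theorem master {m : ℕ} (k : ℕ) (hk2 : 2 * (k + 1) = m) (G : ℕ → ℝ → ℝ → ℝ)
    (hGk : ∀ s n : ℝ,
      (1 - PowerSeries.C (R := ℝ) (2 * s) * PowerSeries.X
        + PowerSeries.C (R := ℝ) n * PowerSeries.X ^ 2) ^ k
        * PowerSeries.mk (fun h => G h s n) = 1)
    (h : ℕ) (y : Fin m → ℝ) :
    ∃ p : MvPolynomial (Fin m) ℝ,
      (∀ x, G h (∑ i, x i * y i) ((∑ i, x i ^ 2) * (∑ i, y i ^ 2)) = MvPolynomial.eval x p) ∧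
      (∀ x, laplacian
        (fun x' => G h (∑ i, x' i * y i) ((∑ i, x' i ^ 2) * (∑ i, y i ^ 2))) x = 0) := by
  have hev : ∀ x : Fin m → ℝ,
      G h (∑ i, x i * y i) ((∑ i, x i ^ 2) * (∑ i, y i ^ 2))
        = MvPolynomial.eval x (PowerSeries.coeff h (RA y ^ k)) := by
    intro x
    rw [← eval_sA y x, ← eval_nA y x]
    exact eval_coeff k G hGk y x h
  refine ⟨PowerSeries.coeff h (RA y ^ k), hev, ?_⟩
  intro x
  rw [funext hev, laplacian_eval, harm_coeff k hk2 y h, map_zero]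

end GegAux

theorem gegenbauer_biharmonic_kernel (m : ℕ) (hm : 2 ≤ m) (hme : Even m)
    (G : ℕ → ℝ → ℝ → ℝ)
    (hG : ∀ s n : ℝ,
      (1 - PowerSeries.C (R := ℝ) (2 * s) * PowerSeries.X
          + PowerSeries.C (R := ℝ) n * PowerSeries.X ^ 2) ^ (m / 2 - 1) *
        PowerSeries.mk (fun h => G h s n) = 1)
    (h : ℕ) :
    let P : (Fin m → ℝ) → (Fin m → ℝ) → ℝ := fun x y =>
      G h (∑ i, x i * y i) ((∑ i, x i ^ 2) * (∑ i, y i ^ 2))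
    (∀ y : Fin m → ℝ,
      (∃ p : MvPolynomial (Fin m) ℝ, ∀ x, P x y = MvPolynomial.eval x p) ∧
      (∀ x, laplacian (fun x' => P x' y) x = 0) ∧
      (∀ (lam : ℝ) (x : Fin m → ℝ), P (lam • x) y = lam ^ h * P x y)) ∧
    (∀ x : Fin m → ℝ,
      (∃ p : MvPolynomial (Fin m) ℝ, ∀ y, P x y = MvPolynomial.eval y p) ∧
      (∀ y, laplacian (fun y' => P x y') y = 0) ∧
      (∀ (lam : ℝ) (y : Fin m → ℝ), P x (lam • y) = lam ^ h * P x y)) ∧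
    (∀ S : (Fin m → ℝ) →ₗ[ℝ] (Fin m → ℝ),
      (∀ a b : Fin m → ℝ, ∑ i, S a i * S b i = ∑ i, a i * b i) →
      ∀ x y : Fin m → ℝ, P (S x) (S y) = P x y) := by
  intro P
  have hk2 : 2 * (m / 2 - 1 + 1) = m := by
    obtain ⟨t, rfl⟩ := hme
    omega
  -- symmetry of the kernel
  have swap : ∀ z w : Fin m → ℝ,
      G h (∑ i, z i * w i) ((∑ i, z i ^ 2) * (∑ i, w i ^ 2))
        = G h (∑ i, w i * z i) ((∑ i, w i ^ 2) * (∑ i, z i ^ 2)) := by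
    intro z w
    rw [mul_comm ((∑ i, z i ^ 2)), Finset.sum_congr rfl fun i _ => mul_comm (z i) (w i)]
  -- homogeneity in the first variable
  have homog1 : ∀ (y : Fin m → ℝ) (lam : ℝ) (x : Fin m → ℝ),
      G h (∑ i, (lam • x) i * y i) ((∑ i, ((lam • x) i) ^ 2) * (∑ i, y i ^ 2))
        = lam ^ h * G h (∑ i, x i * y i) ((∑ i, x i ^ 2) * (∑ i, y i ^ 2)) := by
    intro y lam x
    have hs : ∑ i, (lam • x) i * y i = lam * ∑ i, x i * y i := by
      rw [Finset.mul_sum]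
      exact Finset.sum_congr rfl fun i _ => by simp [mul_assoc]
    have hn : (∑ i, ((lam • x) i) ^ 2) * (∑ i, y i ^ 2)
        = lam ^ 2 * ((∑ i, x i ^ 2) * (∑ i, y i ^ 2)) := by
      have : ∑ i, ((lam • x) i) ^ 2 = lam ^ 2 * ∑ i, x i ^ 2 := by
        rw [Finset.mul_sum]
        exact Finset.sum_congr rfl fun i _ => by simp [mul_pow]
      rw [this]; ring
    rw [hs, hn]
    exact GegAux.homogG (m / 2 - 1) G hG lam _ _ h
  refine ⟨?_, ?_, ?_⟩
  · intro y
    obtain ⟨p, hp, hlap⟩ := GegAux.master (m / 2 - 1) hk2 G hG h y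
    exact ⟨⟨p, fun x => hp x⟩, hlap, fun lam x => homog1 y lam x⟩
  · intro x
    obtain ⟨p, hp, hlap⟩ := GegAux.master (m / 2 - 1) hk2 G hG h x
    refine ⟨⟨p, fun z => (swap x z).trans (hp z)⟩, ?_, ?_⟩
    · intro z
      have : (fun y' => P x y')
          = fun y' => G h (∑ i, y' i * x i) ((∑ i, y' i ^ 2) * (∑ i, x i ^ 2)) :=
        funext fun y' => swap x y'
      rw [this]
      exact hlap z
    · intro lam y
      calc P x (lam • y)
          = G h (∑ i, (lam • y) i * x i) ((∑ i, ((lam • y) i) ^ 2) * (∑ i, x i ^ 2)) :=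
            swap x (lam • y)
        _ = lam ^ h * G h (∑ i, y i * x i) ((∑ i, y i ^ 2) * (∑ i, x i ^ 2)) :=
            homog1 x lam y
        _ = lam ^ h * P x y := by rw [← swap x y]
  · intro S hS x y
    show G h (∑ i, S x i * S y i) ((∑ i, S x i ^ 2) * (∑ i, S y i ^ 2)) = P x y
    have h1 : ∑ i, S x i ^ 2 = ∑ i, x i ^ 2 := by
      have := hS x x
      simpa [sq] using this
    have h2 : ∑ i, S y i ^ 2 = ∑ i, y i ^ 2 := by
      have := hS y y
      simpa [sq] using this
    rw [hS x y, h1, h2]
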